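/- Let T_1 and T_2 be admissible 2-factor types for K_n with n odd, and let λ ≥ 2. (i) If HWP(K_n; T_1, T_2; (n−1)/2, 0), HWP(K_n; T_1, T_2; 0, (n−1)/2), and HWP(K_n; T_1, T_2; α, (n−1)/2 − α) all have solutions, then HWP(λK_n; T_1, T_2; α', λ(n−1)/2 − α') has a solution for all α' ∈ {0, …, λ(n−1)/2} with α' ≡ α (mod (n−1)/2). (ii) If HWP(K_n; T_1, T_2; α, (n−1)/2 − α) has a solution for all α ∈ {0, …, (n−1)/2}, then HWP(λK_n; T_1, T_2; α', λ(n−1)/2 − α') has a solution for all α' ∈ {0, …, λ(n−1)/2}. -/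
import Mathlib


/-- A multigraph on vertex type `V`, given as its multiset of edges. -/
abbrev MG (V : Type) := Multiset (Sym2 V)

/-- The contribution of a single edge to the degree of the vertex `v`
(a loop at `v` counts twice). -/
def edgeDeg {V : Type} [DecidableEq V] (v : V) : Sym2 V → ℕ :=
  Sym2.lift ⟨fun a b => (if a = v then 1 else 0) + (if b = v then 1 else 0),
    fun _ _ => add_comm _ _⟩

/-- The degree of the vertex `v` in the multigraph `G`. -/
def mdeg {V : Type} [DecidableEq V] (G : MG V) (v : V) : ℕ :=
  (G.map (edgeDeg v)).sum

/-- The complete `lam`-fold multigraph `λK_n` on the vertex set `Fin n`. -/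
def completeMG (n lam : ℕ) : MG (Fin n) :=
  lam • ((Finset.univ : Finset (Fin n)).sym2.filter (fun e => ¬ e.IsDiag)).val

/-- The complete `lam`-fold equipartite multigraph `λK_{n×m}` with parts
`V_j = {j} × Fin m`: vertices in distinct parts are joined by `lam` parallel edges. -/
def completeEquipartiteMG (n m lam : ℕ) : MG (Fin n × Fin m) :=
  lam • ((Finset.univ : Finset (Fin n × Fin m)).sym2.filter
      (fun e => ¬ (Sym2.map Prod.fst e).IsDiag)).val

/-- The multiset of edges of the closed walk visiting the entries
of the list `l` in cyclic order. -/
def cycleEdges {V : Type} (l : List V) : MG V :=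
  ↑(List.zipWith (fun a b => s(a, b)) l (l.rotate 1))

/-- `C` is (the edge multiset of) a cycle of length `c`. -/
def IsCycleOfLen {V : Type} (C : MG V) (c : ℕ) : Prop :=
  ∃ l : List V, l.Nodup ∧ l.length = c ∧ 2 ≤ c ∧ C = cycleEdges l

/-- `C` is (the edge multiset of) a cycle. -/
def IsCycle {V : Type} (C : MG V) : Prop :=
  ∃ c, IsCycleOfLen C c

/-- The set of vertices met by `C`. -/
def cycVerts {V : Type} (C : MG V) : Set V :=
  {v | ∃ e ∈ C, v ∈ e}

/-- `I` is a perfect matching (1-factor) on the whole vertex set. -/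
def IsOneFactor {V : Type} [DecidableEq V] (I : MG V) : Prop :=
  ∀ v, mdeg I v = 1

/-- `F` is a 2-factor of type `T`, where `T` is the multiset of its cycle lengths. -/
def IsTwoFactorOfType {V : Type} [DecidableEq V] (F : MG V) (T : Multiset ℕ) : Prop :=
  (∀ v, mdeg F v = 2) ∧
    ∃ D : Multiset (MG V), D.sum = F ∧ Multiset.Rel IsCycleOfLen D T

/-- `F` is an almost 2-factor of type `T`: a 2-factor of `G - v₀` for some vertex `v₀`. -/
def IsAlmostTwoFactorOfType {V : Type} [DecidableEq V] (F : MG V) (T : Multiset ℕ) : Prop :=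
  ∃ v₀ : V, mdeg F v₀ = 0 ∧ (∀ v, v ≠ v₀ → mdeg F v = 2) ∧
    ∃ D : Multiset (MG V), D.sum = F ∧ Multiset.Rel IsCycleOfLen D T

/-- `F` is a holey 2-factor of `λK_{n×m}` of type `T`: a 2-factor of the graph
minus one part. -/
def IsHoleyTwoFactorOfType {n m : ℕ} (F : MG (Fin n × Fin m)) (T : Multiset ℕ) : Prop :=
  ∃ j : Fin n, (∀ v : Fin n × Fin m, v.1 = j → mdeg F v = 0) ∧
    (∀ v : Fin n × Fin m, v.1 ≠ j → mdeg F v = 2) ∧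
    ∃ D : Multiset (MG (Fin n × Fin m)), D.sum = F ∧ Multiset.Rel IsCycleOfLen D T

/-- `G` admits a 2-factorization of type `T` (a multiset of 2-factor types):
a decomposition into 2-factors of the given types, together with a single
1-factor in the odd-degree case. -/
def HasTwoFactorization {V : Type} [DecidableEq V] (G : MG V)
    (T : Multiset (Multiset ℕ)) : Prop :=
  ∃ Fs : Multiset (MG V), Multiset.Rel IsTwoFactorOfType Fs T ∧
    (Fs.sum = G ∨ ∃ I, IsOneFactor I ∧ I + Fs.sum = G)

/-- `G` admits a `(c 0, …, c (k-1))`-cycle decomposition. -/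
def HasCycleDecompWithLengths {V : Type} [DecidableEq V] (G : MG V) {k : ℕ}
    (c : Fin k → ℕ) : Prop :=
  ∃ C : Fin k → MG V, (∀ i, IsCycleOfLen (C i) (c i)) ∧
    ((∑ i, C i) = G ∨ ∃ I, IsOneFactor I ∧ I + ∑ i, C i = G)

/-- `G` admits an `[a 0, …, a (l-1)]`-resolvable `(c 0, …, c (k-1))`-cycle
decomposition: the cycles split into classes such that the `j`-th class is a
`2 * a j`-factor of `G`. -/
def HasResolvableCycleDecomp {V : Type} [DecidableEq V] (G : MG V) {k l : ℕ}
    (c : Fin k → ℕ) (a : Fin l → ℕ) : Prop :=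
  ∃ (C : Fin k → MG V) (p : Fin k → Fin l),
    (∀ i, IsCycleOfLen (C i) (c i)) ∧
    (∀ (j : Fin l) (v : V),
      mdeg (∑ i ∈ Finset.univ.filter (fun i => p i = j), C i) v = 2 * a j) ∧
    ((∑ i, C i) = G ∨ ∃ I, IsOneFactor I ∧ I + ∑ i, C i = G)

/-- `mT`: multiply every cycle length of the 2-factor type `T` by `m`. -/
def scaleType (m : ℕ) (T : Multiset ℕ) : Multiset ℕ :=
  T.map (fun c => m * c)

/-- A 2-factor type is bipartite when all its cycle lengths are even. -/
def BipartiteType (T : Multiset ℕ) : Prop :=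
  ∀ c ∈ T, Even c

/-- `T` is an admissible 2-factor type for `λK_n`. -/
def AdmissibleTypeKn (lam n : ℕ) (T : Multiset ℕ) : Prop :=
  T.sum = n ∧ (∀ c ∈ T, 2 ≤ c) ∧ (lam = 1 → ∀ c ∈ T, 3 ≤ c)

/-- `T` is admissible for the multigraph `G`: `G` contains a 2-factor of type `T`. -/
def AdmissibleFor {V : Type} [DecidableEq V] (G : MG V) (T : Multiset ℕ) : Prop :=
  ∃ F : MG V, F ≤ G ∧ IsTwoFactorOfType F T

/-- `M'` is a refinement of `M`: `M'` can be partitioned into groups whose sums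
give the entries of `M`. -/
def IsRefinement (M' M : Multiset ℕ) : Prop :=
  ∃ P : Multiset (Multiset ℕ), P.sum = M' ∧ P.map Multiset.sum = M

/-- The Oberwolfach problem `OP(λK_n; T)` has a solution. -/
def OPc (n lam : ℕ) (T : Multiset ℕ) : Prop :=
  HasTwoFactorization (completeMG n lam) (Multiset.replicate (lam * (n - 1) / 2) T)

/-- The Oberwolfach problem `OP(λK_{n×m}; T)` has a solution. -/
def OPe (n m lam : ℕ) (T : Multiset ℕ) : Prop :=
  HasTwoFactorization (completeEquipartiteMG n m lam)
    (Multiset.replicate (lam * m * (n - 1) / 2) T)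

/-- The Hamilton–Waterloo problem `HWP(λK_n; T₁, T₂; a, b)` has a solution. -/
def HWPc (n lam : ℕ) (T1 T2 : Multiset ℕ) (a b : ℕ) : Prop :=
  a + b = lam * (n - 1) / 2 ∧
    HasTwoFactorization (completeMG n lam)
      (Multiset.replicate a T1 + Multiset.replicate b T2)

/-- The Hamilton–Waterloo problem `HWP(λK_{n×m}; T₁, T₂; a, b)` has a solution. -/
def HWPe (n m lam : ℕ) (T1 T2 : Multiset ℕ) (a b : ℕ) : Prop :=
  a + b = lam * m * (n - 1) / 2 ∧
    HasTwoFactorization (completeEquipartiteMG n m lam)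
      (Multiset.replicate a T1 + Multiset.replicate b T2)

lemma mdeg_add {V : Type} [DecidableEq V] (G H : MG V) (v : V) :
    mdeg (G + H) v = mdeg G v + mdeg H v := by
  simp [mdeg]

lemma mdeg_nsmul {V : Type} [DecidableEq V] (k : ℕ) (G : MG V) (v : V) :
    mdeg (k • G) v = k * mdeg G v := by
  induction k with
  | zero => simp [mdeg]
  | succ k ih => rw [succ_nsmul, mdeg_add, ih]; ring

lemma edgeDeg_eq {V : Type} [DecidableEq V] (v : V) (e : Sym2 V) (h : ¬ e.IsDiag) :
    edgeDeg v e = if v ∈ e then 1 else 0 := by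
  induction e using Sym2.ind with
  | _ a b =>
    rw [Sym2.mk_isDiag_iff] at h
    simp only [edgeDeg, Sym2.lift_mk, Sym2.mem_iff]
    by_cases h1 : a = v <;> by_cases h2 : b = v <;> simp_all [eq_comm]

lemma filter_eq_image (n : ℕ) (v : Fin n) :
    (((Finset.univ : Finset (Fin n)).sym2.filter (fun e => ¬ e.IsDiag)).filter
        (fun e => v ∈ e))
      = (Finset.univ.erase v).image (fun w => s(v, w)) := by
  ext e
  induction e using Sym2.ind with
  | _ a b =>
    simp only [Finset.mem_filter, Finset.mem_image, Finset.mem_erase, Finset.mem_univ,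
      and_true, true_and, Sym2.mem_iff, Sym2.mk_isDiag_iff, Finset.mk_mem_sym2_iff,
      Sym2.eq_iff]
    constructor
    · rintro ⟨hne, hv | hv⟩
      · exact ⟨b, by aesop⟩
      · exact ⟨a, by aesop⟩
    · rintro ⟨w, hw, h⟩
      aesop

lemma mdeg_complete (n lam : ℕ) (v : Fin n) :
    mdeg (completeMG n lam) v = lam * (n - 1) := by
  rw [completeMG, mdeg_nsmul]
  congr 1
  have h1 : mdeg (((Finset.univ : Finset (Fin n)).sym2.filter (fun e => ¬ e.IsDiag)).val) v
      = ∑ e ∈ (Finset.univ : Finset (Fin n)).sym2.filter (fun e => ¬ e.IsDiag),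
          edgeDeg v e := rfl
  rw [h1, Finset.sum_congr rfl (fun e he => edgeDeg_eq v e (Finset.mem_filter.mp he).2),
    ← Finset.card_filter, filter_eq_image]
  rw [Finset.card_image_of_injOn, Finset.card_erase_of_mem (Finset.mem_univ v),
    Finset.card_univ, Fintype.card_fin]
  intro w hw w' hw' h
  rw [Sym2.eq_iff] at h
  rcases h with ⟨-, h⟩ | ⟨h1, h2⟩
  · exact h
  · exact absurd h1.symm (Finset.ne_of_mem_erase hw')

lemma twofactor_sum_deg {V : Type} [DecidableEq V] {Fs : Multiset (MG V)}
    {Ts : Multiset (Multiset ℕ)} (h : Multiset.Rel IsTwoFactorOfType Fs Ts) (v : V) :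
    mdeg Fs.sum v = 2 * Ts.card := by
  induction h with
  | zero => simp [mdeg]
  | @cons F T Fs Ts hFT _ ih =>
      rw [Multiset.sum_cons, mdeg_add, ih, hFT.1 v, Multiset.card_cons]; ring

lemma half_eq (lam m n : ℕ) (hm : n = 2 * m + 1) : lam * (n - 1) / 2 = lam * m := by
  subst hm
  rw [Nat.add_sub_cancel, show lam * (2 * m) = lam * m * 2 by ring,
    Nat.mul_div_cancel _ two_pos]

lemma completeMG_add (n l1 l2 : ℕ) :
    completeMG n (l1 + l2) = completeMG n l1 + completeMG n l2 := by
  simp [completeMG, add_nsmul]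

lemma HWPc_cast {n l l' : ℕ} {T1 T2 : Multiset ℕ} {a a' b b' : ℕ}
    (h : HWPc n l T1 T2 a b) (hl : l = l') (ha : a = a') (hb : b = b') :
    HWPc n l' T1 T2 a' b' := by subst hl ha hb; exact h

lemma HWPc_nofactor {n lam : ℕ} {T1 T2 : Multiset ℕ} {a b : ℕ}
    (hnodd : Odd n) (hn : 0 < n) (h : HWPc n lam T1 T2 a b) :
    ∃ Fs, Multiset.Rel IsTwoFactorOfType Fs
        (Multiset.replicate a T1 + Multiset.replicate b T2) ∧
      Fs.sum = completeMG n lam := by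
  obtain ⟨hab, Fs, hrel, hsum⟩ := h
  refine ⟨Fs, hrel, ?_⟩
  rcases hsum with h | ⟨I, hI, hIsum⟩
  · exact h
  · exfalso
    obtain ⟨m, hm⟩ := hnodd
    have hd := congrArg (fun G => mdeg G ⟨0, hn⟩) hIsum
    simp only [mdeg_add] at hd
    rw [twofactor_sum_deg hrel, mdeg_complete, hI] at hd
    simp only [Multiset.card_add, Multiset.card_replicate] at hd
    rw [half_eq lam m n hm] at hab
    rw [show lam * (n - 1) = 2 * (lam * m) by rw [hm, Nat.add_sub_cancel]; ring] at hd
    set K := lam * m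
    omega

lemma HWPc_combine {n l1 l2 : ℕ} {T1 T2 : Multiset ℕ} {a1 b1 a2 b2 : ℕ}
    (hnodd : Odd n) (hn : 0 < n)
    (h1 : HWPc n l1 T1 T2 a1 b1) (h2 : HWPc n l2 T1 T2 a2 b2) :
    HWPc n (l1 + l2) T1 T2 (a1 + a2) (b1 + b2) := by
  have hab1 := h1.1
  have hab2 := h2.1
  obtain ⟨Fs1, hrel1, hsum1⟩ := HWPc_nofactor hnodd hn h1
  obtain ⟨Fs2, hrel2, hsum2⟩ := HWPc_nofactor hnodd hn h2
  obtain ⟨m, hm⟩ := hnodd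
  refine ⟨?_, Fs1 + Fs2, ?_, Or.inl ?_⟩
  · rw [half_eq _ m n hm] at hab1 hab2 ⊢
    rw [add_mul]; omega
  · have e : Multiset.replicate (a1 + a2) T1 + Multiset.replicate (b1 + b2) T2
        = (Multiset.replicate a1 T1 + Multiset.replicate b1 T2)
          + (Multiset.replicate a2 T1 + Multiset.replicate b2 T2) := by
      rw [Multiset.replicate_add, Multiset.replicate_add]; abel
    rw [e]
    exact hrel1.add hrel2
  · rw [Multiset.sum_add, hsum1, hsum2, completeMG_add]

lemma HWPc_zero (n : ℕ) (T1 T2 : Multiset ℕ) : HWPc n 0 T1 T2 0 0 := by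
  refine ⟨by simp, 0, ?_, Or.inl ?_⟩
  · simp only [Multiset.replicate_zero, add_zero]
    exact Multiset.Rel.zero
  · simp [completeMG]

lemma HWPc_rep {n : ℕ} {T1 T2 : Multiset ℕ} {a b : ℕ} (hnodd : Odd n) (hn : 0 < n)
    (h : HWPc n 1 T1 T2 a b) (k : ℕ) : HWPc n k T1 T2 (k * a) (k * b) := by
  induction k with
  | zero => simpa using HWPc_zero n T1 T2
  | succ k ih =>
      exact HWPc_cast (HWPc_combine hnodd hn h ih) (by ring) (by ring) (by ring)

lemma HWPc_main {n lam : ℕ} {T1 T2 : Multiset ℕ} (hnodd : Odd n) (hn : 0 < n)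
    (hfull : HWPc n 1 T1 T2 ((n - 1) / 2) 0)
    (hzero : HWPc n 1 T1 T2 0 ((n - 1) / 2))
    (α : ℕ) (hmix : HWPc n 1 T1 T2 α ((n - 1) / 2 - α))
    (α' : ℕ) (hle : α' ≤ lam * (n - 1) / 2)
    (hmod : α' % ((n - 1) / 2) = α % ((n - 1) / 2)) :
    HWPc n lam T1 T2 α' (lam * (n - 1) / 2 - α') := by
  obtain ⟨m, hm⟩ := id hnodd
  have H : lam * (n - 1) / 2 = lam * m := half_eq lam m n hm
  have H1 : (n - 1) / 2 = m := by omega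
  rw [H1] at hfull hzero hmix hmod
  rw [H] at hle ⊢
  have hα : α ≤ m := by have := hmix.1; omega
  by_cases hm0 : m = 0
  · subst hm0
    exact HWPc_cast (HWPc_rep hnodd hn hzero lam) rfl (by omega) (by omega)
  · have hdm := Nat.div_add_mod α' m
    set q := α' / m with hq
    set r := α' % m with hr
    have hrm : r < m := Nat.mod_lt _ (by omega)
    have e0 : q * m + r = α' := by rw [mul_comm]; exact hdm
    by_cases hr0 : r = 0
    · have e0' : q * m = α' := by omega
      have hqlam : q ≤ lam := by
        have h1 : q * m ≤ lam * m := by rw [e0']; exact hle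
        exact Nat.le_of_mul_le_mul_right h1 (by omega)
      obtain ⟨s, hs⟩ : ∃ s, lam = q + s := ⟨lam - q, by omega⟩
      have c := HWPc_combine hnodd hn (HWPc_rep hnodd hn hfull q)
        (HWPc_rep hnodd hn hzero s)
      refine HWPc_cast c hs.symm ?_ ?_
      · rw [mul_zero, add_zero, e0']
      · rw [mul_zero, zero_add, hs, add_mul]
        have h2 : q * m = α' := e0'
        set X := q * m
        set Y := s * m
        omega
    · have hαm : α < m := by
        rcases Nat.lt_or_ge α m with h | h
        · exact h
        · have : α = m := le_antisymm hα h
          rw [this, Nat.mod_self] at hmod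
          omega
      have hrα : r = α := by rw [Nat.mod_eq_of_lt hαm] at hmod; exact hmod
      have hqlam : q < lam := by
        have h1 : q * m < lam * m := by
          calc q * m < q * m + r := by omega
            _ = α' := e0
            _ ≤ lam * m := hle
        exact Nat.lt_of_mul_lt_mul_right h1
      obtain ⟨s, hs⟩ : ∃ s, lam = 1 + q + s := ⟨lam - 1 - q, by omega⟩
      have c := HWPc_combine hnodd hn
        (HWPc_combine hnodd hn hmix (HWPc_rep hnodd hn hfull q))
        (HWPc_rep hnodd hn hzero s)
      refine HWPc_cast c hs.symm ?_ ?_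
      · rw [mul_zero, add_zero]
        set X := q * m
        omega
      · rw [mul_zero, add_zero, hs, add_mul, add_mul, one_mul]
        set X := q * m
        set Y := s * m
        omega


/-- Corollary 7.2: building solutions of the Hamilton–Waterloo
problem for `λK_n` (`n` odd, `λ ≥ 2`) from solutions for `K_n`. -/
theorem HWP_layering_odd_n (n lam : ℕ) (hnodd : Odd n) (hn : 0 < n) (hlam : 2 ≤ lam)
    (T1 T2 : Multiset ℕ)
    (hT1 : AdmissibleTypeKn 1 n T1) (hT2 : AdmissibleTypeKn 1 n T2) :
    (∀ α : ℕ,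
      HWPc n 1 T1 T2 ((n - 1) / 2) 0 →
      HWPc n 1 T1 T2 0 ((n - 1) / 2) →
      HWPc n 1 T1 T2 α ((n - 1) / 2 - α) →
      ∀ α' : ℕ, α' ≤ lam * (n - 1) / 2 →
        α' % ((n - 1) / 2) = α % ((n - 1) / 2) →
        HWPc n lam T1 T2 α' (lam * (n - 1) / 2 - α')) ∧
    ((∀ α : ℕ, α ≤ (n - 1) / 2 → HWPc n 1 T1 T2 α ((n - 1) / 2 - α)) →
      ∀ α' : ℕ, α' ≤ lam * (n - 1) / 2 →
        HWPc n lam T1 T2 α' (lam * (n - 1) / 2 - α')) := by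
  constructor
  · intro α hfull hzero hmix α' hle hmod
    exact HWPc_main hnodd hn hfull hzero α hmix α' hle hmod
  · intro hall α' hle
    have hfull : HWPc n 1 T1 T2 ((n - 1) / 2) 0 :=
      HWPc_cast (hall _ le_rfl) rfl rfl (by omega)
    have hzero : HWPc n 1 T1 T2 0 ((n - 1) / 2) :=
      HWPc_cast (hall 0 (Nat.zero_le _)) rfl rfl (by omega)
    by_cases h0 : (n - 1) / 2 = 0
    · obtain ⟨m, hm⟩ := id hnodd
      have hm0 : m = 0 := by omega
      have hα'0 : α' = 0 := by
        rw [half_eq lam m n hm, hm0, mul_zero] at hle; omega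
      refine HWPc_main hnodd hn hfull hzero 0 (hall 0 (Nat.zero_le _)) α' hle ?_
      rw [h0, Nat.mod_zero, Nat.mod_zero, hα'0]
    · refine HWPc_main hnodd hn hfull hzero (α' % ((n - 1) / 2))
        (hall _ (le_of_lt (Nat.mod_lt _ (by omega)))) α' hle ?_
      rw [Nat.mod_mod_of_dvd α' dvd_rfl]
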